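/- Suppose the stationary measure ℙ satisfies condition ID, let y ∈ supp ℙ, and for each N let y_1^N = y^{(1,N)} y^{(2,N)} ⋯ y^{(c'_N,N)} be any parsing of y_1^N into consecutive words whose lengths |y^{(j,N)}| are all at least λ_N, where (λ_N) is a nonnegative sequence with λ_N → ∞. Then Σ_{j=1}^{c'_N} ln ℙ[y^{(j,N)}] = ln ℙ[y_1^N] + o(N); that is, for every ε > 0 there is N_0 such that |Σ_{j=1}^{c'_N} ln ℙ[y^{(j,N)}] − ln ℙ[y_1^N]| ≤ εN for all N ≥ N_0. -/

import Mathlib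

open MeasureTheory Filter Asymptotics
open scoped ENNReal Classical

noncomputable section

namespace ZM

/-- The left shift on one-sided sequences. -/
def shift {A : Type*} (x : ℕ → A) : ℕ → A := fun k => x (k + 1)

/-- The cylinder set of all sequences starting with the word `a`. -/
def cyl {A : Type*} {n : ℕ} (a : Fin n → A) : Set (ℕ → A) := {x | ∀ i : Fin n, x i = a i}

/-- The word `x_{p+1}^{p+ℓ}` of `x` (0-based: the letters at positions `p, …, p+ℓ-1`). -/
def seg {A : Type*} (y : ℕ → A) (p ℓ : ℕ) : Fin ℓ → A := fun i => y (p + i)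

/-- `w` occurs in `x` at (0-based) offset `r`. -/
def matchAt {A : Type*} (x : ℕ → A) {ℓ : ℕ} (w : Fin ℓ → A) (r : ℕ) : Prop :=
  ∀ i : Fin ℓ, x (r + i) = w i

/-- `w` appears as a substring of `x_1^N`. -/
def appears {A : Type*} (N : ℕ) (x : ℕ → A) {ℓ : ℕ} (w : Fin ℓ → A) : Prop :=
  ∃ r, r + ℓ ≤ N ∧ matchAt x w r

/-- The waiting time `W_ℓ(w, x)`: the least (1-based) position at which `w` occurs in `x`,
`⊤` if `w` never occurs. -/
def W {A : Type*} {ℓ : ℕ} (w : Fin ℓ → A) (x : ℕ → A) : ℕ∞ :=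
  sInf {r : ℕ∞ | ∃ n : ℕ, r = (n : ℕ∞) ∧ 1 ≤ n ∧ matchAt x w (n - 1)}

section ZMparsing

variable {A : Type*}

/-- Length of the Ziv–Merhav word starting at (0-based) position `p` of `y_1^N`, with
database `x_1^N`: the longest prefix of the remaining portion of `y_1^N` appearing as a
substring of `x_1^N`, or a single letter if there is no such prefix. -/
def zmLen (N : ℕ) (x y : ℕ → A) (p : ℕ) : ℕ :=
  max 1 (sSup {ℓ | p + ℓ ≤ N ∧ appears N x (seg y p ℓ)})

/-- Starting position of the `j`-th (0-based) word of the Ziv–Merhav parsing. -/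
def zmPos (N : ℕ) (x y : ℕ → A) : ℕ → ℕ
  | 0 => 0
  | j + 1 => zmPos N x y j + zmLen N x y (zmPos N x y j)

/-- `c_N(y|x)`: the number of words in the Ziv–Merhav parsing of `y_1^N` w.r.t. `x_1^N`. -/
def cN (N : ℕ) (x y : ℕ → A) : ℕ := sInf {c | N ≤ zmPos N x y c}

/-- The Ziv–Merhav estimator `Q̂_N(y, x) = c_N(y|x) ln N / N`. -/
def ZMest (N : ℕ) (x y : ℕ → A) : ℝ := (cN N x y : ℝ) * Real.log N / N

end ZMparsing

section MeasureDefs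

variable {A : Type*} [MeasurableSpace A]

/-- The measure of the cylinder of a word, as a real number. -/
def wp (μ : Measure (ℕ → A)) {n : ℕ} (a : Fin n → A) : ℝ := (μ (cyl a)).toReal

/-- `supp ℙ`: the set of sequences all of whose prefixes have positive measure. -/
def suppSet (μ : Measure (ℕ → A)) : Set (ℕ → A) := {x | ∀ n, 0 < μ (cyl (seg x 0 n))}

/-- Condition (ID): immediate decoupling on the support, with sequence `k`. -/
def CondID (μ : Measure (ℕ → A)) (k : ℕ → ℝ) : Prop :=
  Monotone k ∧ (k =o[atTop] fun n => (n : ℝ)) ∧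
    ∀ (n m : ℕ) (a : Fin n → A) (b : Fin m → A), 0 < μ (cyl a) → 0 < μ (cyl b) →
      wp μ (Fin.append a b) ≤ Real.exp (k n) * (wp μ a * wp μ b) ∧
      (0 < μ (cyl (Fin.append a b)) →
        Real.exp (-k n) * (wp μ a * wp μ b) ≤ wp μ (Fin.append a b))

/-- Condition (FE): fast enough decay, with rate `γp < 0`. -/
def CondFE (μ : Measure (ℕ → A)) (γp : ℝ) : Prop :=
  γp < 0 ∧ ∀ᶠ n : ℕ in atTop, ∀ a : Fin n → A, 0 < μ (cyl a) → wp μ a ≤ Real.exp (γp * n)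

/-- Condition (SE): slow enough decay, with rate `γm < 0`. -/
def CondSE (μ : Measure (ℕ → A)) (γm : ℝ) : Prop :=
  γm < 0 ∧ ∀ᶠ n : ℕ in atTop, ∀ a : Fin n → A, 0 < μ (cyl a) → Real.exp (γm * n) ≤ wp μ a

/-- Condition (KB): Kontoyiannis' bound on waiting times, with sequences `k`, `τ`. -/
def CondKB (μ : Measure (ℕ → A)) (k τ : ℕ → ℝ) : Prop :=
  (k =o[atTop] fun n => (n : ℝ)) ∧ (τ =o[atTop] fun n => (n : ℝ)) ∧
    ∀ (ℓ : ℕ) (a : Fin ℓ → A) (r : ℕ),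
      (μ {x | (r : ℕ∞) ≤ W a x}).toReal ≤
        Real.exp (-(Real.exp (-k ℓ) * wp μ a * (⌊((r : ℝ) - 1) / ((ℓ : ℝ) + τ ℓ)⌋ : ℝ)))

/-- Length of the next word of the auxiliary parsing of `y_1^N` starting at position `p`:
the shortest prefix of the remaining portion of `y_1^N` with measure at most `θ`, or the
whole remaining portion if there is no such prefix. -/
def auxLen (μ : Measure (ℕ → A)) (θ : ℝ) (N : ℕ) (y : ℕ → A) (p : ℕ) : ℕ :=
  if ∃ ℓ, 1 ≤ ℓ ∧ p + ℓ ≤ N ∧ wp μ (seg y p ℓ) ≤ θ then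
    sInf {ℓ | 1 ≤ ℓ ∧ p + ℓ ≤ N ∧ wp μ (seg y p ℓ) ≤ θ}
  else N - p

/-- Starting position of the `j`-th (0-based) word of the auxiliary parsing. -/
def auxPos (μ : Measure (ℕ → A)) (θ : ℝ) (N : ℕ) (y : ℕ → A) : ℕ → ℕ
  | 0 => 0
  | j + 1 => auxPos μ θ N y j + max 1 (auxLen μ θ N y (auxPos μ θ N y j))

/-- Length of the `j`-th (0-based) word of the auxiliary parsing. -/
def auxWordLen (μ : Measure (ℕ → A)) (θ : ℝ) (N : ℕ) (y : ℕ → A) (j : ℕ) : ℕ :=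
  max 1 (auxLen μ θ N y (auxPos μ θ N y j))

/-- The number of words in the auxiliary parsing of `y_1^N`. -/
def auxCount (μ : Measure (ℕ → A)) (θ : ℝ) (N : ℕ) (y : ℕ → A) : ℕ :=
  sInf {c | N ≤ auxPos μ θ N y c}

/-- Length of the next word of the block parsing within a block ending at position `e`:
the shortest prefix of the remaining portion of the block with measure at most `θ`;
`0` encodes that no such prefix exists (the rest of the block is the buffer). -/
def blkLen (μ : Measure (ℕ → A)) (θ : ℝ) (e : ℕ) (y : ℕ → A) (p : ℕ) : ℕ :=
  sInf {ℓ | 1 ≤ ℓ ∧ p + ℓ ≤ e ∧ wp μ (seg y p ℓ) ≤ θ}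

/-- Starting position of the `i`-th (0-based) word of the block starting at `q`, ending at `e`. -/
def blkPos (μ : Measure (ℕ → A)) (θ : ℝ) (e : ℕ) (y : ℕ → A) (q : ℕ) : ℕ → ℕ
  | 0 => q
  | i + 1 => blkPos μ θ e y q i + blkLen μ θ e y (blkPos μ θ e y q i)

/-- Number `d_s` of words in the block starting at `q` and ending at `e`. -/
def dCount (μ : Measure (ℕ → A)) (θ : ℝ) (e : ℕ) (y : ℕ → A) (q : ℕ) : ℕ :=
  sInf {i | blkLen μ θ e y (blkPos μ θ e y q i) = 0}

/-- The block starting at `q` and ending at `e` is good: its parsed words are pairwise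
distinct. -/
def GoodBlock (μ : Measure (ℕ → A)) (θ : ℝ) (e : ℕ) (y : ℕ → A) (q : ℕ) : Prop :=
  ∀ i j : ℕ, i < dCount μ θ e y q → j < dCount μ θ e y q →
    blkLen μ θ e y (blkPos μ θ e y q i) = blkLen μ θ e y (blkPos μ θ e y q j) →
    (∀ t < blkLen μ θ e y (blkPos μ θ e y q i),
      y (blkPos μ θ e y q i + t) = y (blkPos μ θ e y q j + t)) →
    i = j

end MeasureDefs

/-- The block length `⌊N^α⌋`. -/
def blockB (N : ℕ) (α : ℝ) : ℕ := ⌊(N : ℝ) ^ α⌋₊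

/-- The number `M_N` of blocks. -/
def blockM (N : ℕ) (α : ℝ) : ℕ := (N + blockB N α - 1) / blockB N α

/-- The starting position of the `s`-th (0-based) block. -/
def blockStart (N : ℕ) (α : ℝ) (s : ℕ) : ℕ := s * blockB N α

/-- The end position of the `s`-th (0-based) block. -/
def blockEnd (N : ℕ) (α : ℝ) (s : ℕ) : ℕ := min ((s + 1) * blockB N α) N

/-- `S_b(y_1^N)`: the set of bad blocks of the block auxiliary parsing (with threshold
`N^{-1-ε}`, word probabilities computed with `μ`). -/
def badSet {A : Type*} [MeasurableSpace A] (μ : Measure (ℕ → A)) (N : ℕ) (α ε : ℝ)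
    (y : ℕ → A) : Set ℕ :=
  {s | s < blockM N α ∧
    ¬ GoodBlock μ ((N : ℝ) ^ (-1 - ε)) (blockEnd N α s) y (blockStart N α s)}

/-- `ℓ₋ = ln N / (-2 γ₋)`. -/
def ellMinus (N : ℕ) (γm : ℝ) : ℝ := Real.log N / (-2 * γm)

/-- `ℓ₊ = 2 ln N / (-γ₊)`. -/
def ellPlus (N : ℕ) (γp : ℝ) : ℝ := 2 * Real.log N / (-γp)

/-- `d₊ = 2 N^α / ℓ₋`. -/
def dPlus (N : ℕ) (α γm : ℝ) : ℝ := 2 * (N : ℝ) ^ α / ellMinus N γm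

section CrossEntropy

variable {A : Type*} [MeasurableSpace A] [Fintype A]

/-- The `n`-th cross-entropy average `-(1/n) ∑_{a ∈ 𝒜ⁿ} ℚ[a] ln ℙ[a]`, real-valued version. -/
def hcSeq (μP μQ : Measure (ℕ → A)) (n : ℕ) : ℝ :=
  -(1 / (n : ℝ)) * ∑ a : Fin n → A, wp μQ a * Real.log (wp μP a)

/-- `-ln p` as an element of `[0, ∞]`, for `p ∈ [0, 1]`; equals `⊤` when `p = 0`. -/
def negLog (p : ℝ≥0∞) : ℝ≥0∞ := if p = 0 then ⊤ else ENNReal.ofReal (-Real.log p.toReal)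

/-- The `n`-th cross-entropy average, `[0, ∞]`-valued version. -/
def hcSeqE (μP μQ : Measure (ℕ → A)) (n : ℕ) : ℝ≥0∞ :=
  (∑ a : Fin n → A, μQ (cyl a) * negLog (μP (cyl a))) / (n : ℝ≥0∞)

end CrossEntropy

end ZM

/-!
Condition (ID) makes `(p, n) ↦ ln ℙ[y_{p+1}^{p+n}]` additive under concatenation up to an
error `k_n` depending only on the length of the first word, and stationarity puts every
subword of `y ∈ supp ℙ` in the support, where (ID) applies. Telescoping along a parsing
therefore costs `∑_j k_{ℓ_j}`, which is at most `ε ∑_j ℓ_j = ε N` as soon as all word lengths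
`ℓ_j ≥ λ_N` are large enough for `k_ℓ ≤ ε ℓ`.
-/

namespace ZM

theorem abs_sum_parsing_sub_le (f : ℕ → ℕ → ℝ) (k : ℕ → ℝ) (hf₀ : ∀ p, f p 0 = 0)
    (hf : ∀ p n m, |f p (n + m) - (f p n + f (p + n) m)| ≤ k n) (l : List ℕ) (p : ℕ) :
    |∑ i ∈ Finset.range l.length, f (p + (l.take i).sum) (l.getD i 0) - f p l.sum| ≤
      (l.map k).sum := by
  induction l generalizing p with
  | nil => simp [hf₀]
  | cons a l ih =>
    have htail := ih (p + a)
    simp only [List.length_cons, List.sum_cons, List.map_cons, Finset.sum_range_succ',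
      List.take_succ_cons, List.getD_cons_succ, List.take_zero, List.sum_nil, add_zero,
      List.getD_cons_zero, ← add_assoc] at htail ⊢
    calc _ = |(∑ i ∈ Finset.range l.length, f (p + a + (l.take i).sum) (l.getD i 0) -
              f (p + a) l.sum) - (f p (a + l.sum) - (f p a + f (p + a) l.sum))| := by
            ring_nf
      _ ≤ _ := (abs_sub _ _).trans (by linarith [hf p a l.sum])

theorem abs_log_sub_log_mul_le {a b c k : ℝ} (ha : 0 < a) (hb : 0 < b)
    (hlo : Real.exp (-k) * (a * b) ≤ c) (hhi : c ≤ Real.exp k * (a * b)) :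
    |Real.log c - (Real.log a + Real.log b)| ≤ k := by
  have hc : 0 < c := lt_of_lt_of_le (by positivity) hlo
  have hlo' := Real.log_le_log (by positivity) hlo
  have hhi' := Real.log_le_log hc hhi
  rw [Real.log_mul (by positivity) (by positivity), Real.log_mul ha.ne' hb.ne',
    Real.log_exp] at hlo' hhi'
  exact abs_le.mpr ⟨by linarith, by linarith⟩

section Words

variable {A : Type*}

theorem shift_iterate_apply (x : ℕ → A) (p n : ℕ) : shift^[p] x n = x (n + p) := by
  induction p generalizing x with
  | zero => rfl
  | succ p ih => rw [Function.iterate_succ_apply, ih, shift, add_assoc]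

theorem append_seg_seg (y : ℕ → A) (p n m : ℕ) :
    Fin.append (seg y p n) (seg y (p + n) m) = seg y p (n + m) := by
  funext i
  refine Fin.addCases (fun j => ?_) (fun j => ?_) i
  · simp [seg]
  · simp [seg, add_assoc]

theorem cyl_seg_zero_subset_preimage (y : ℕ → A) (p ℓ : ℕ) :
    cyl (seg y 0 (p + ℓ)) ⊆ shift^[p] ⁻¹' cyl (seg y p ℓ) := by
  intro x hx i
  rw [shift_iterate_apply, add_comm]
  simpa [seg] using hx ⟨p + i, by omega⟩

end Words

section Measure

variable {A : Type*} [MeasurableSpace A] {μ : Measure (ℕ → A)}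

theorem measure_cyl_seg_pos (hstat : MeasurePreserving shift μ μ) {y : ℕ → A}
    (hy : y ∈ suppSet μ) (p ℓ : ℕ) : 0 < μ (cyl (seg y p ℓ)) :=
  calc 0 < μ (cyl (seg y 0 (p + ℓ))) := hy (p + ℓ)
    _ ≤ μ (shift^[p] ⁻¹' cyl (seg y p ℓ)) := measure_mono (cyl_seg_zero_subset_preimage y p ℓ)
    _ ≤ μ.map shift^[p] (cyl (seg y p ℓ)) :=
      Measure.le_map_apply (hstat.iterate p).measurable.aemeasurable _
    _ = μ (cyl (seg y p ℓ)) := by rw [(hstat.iterate p).map_eq]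

theorem wp_pos [IsFiniteMeasure μ] {n : ℕ} {a : Fin n → A} (h : 0 < μ (cyl a)) : 0 < wp μ a :=
  ENNReal.toReal_pos h.ne' (measure_ne_top μ _)

theorem wp_of_fin_zero [IsProbabilityMeasure μ] (a : Fin 0 → A) : wp μ a = 1 := by
  have : cyl a = Set.univ := Set.eq_univ_of_forall fun _ i => i.elim0
  simp [wp, this]

theorem abs_log_wp_seg_add_sub_le [IsFiniteMeasure μ] (hstat : MeasurePreserving shift μ μ)
    {k : ℕ → ℝ} (hID : CondID μ k) {y : ℕ → A} (hy : y ∈ suppSet μ) (p n m : ℕ) :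
    |Real.log (wp μ (seg y p (n + m))) -
      (Real.log (wp μ (seg y p n)) + Real.log (wp μ (seg y (p + n) m)))| ≤ k n := by
  have ha := measure_cyl_seg_pos hstat hy p n
  have hb := measure_cyl_seg_pos hstat hy (p + n) m
  obtain ⟨hhi, hlo⟩ := hID.2.2 n m _ _ ha hb
  rw [append_seg_seg] at hhi hlo
  exact abs_log_sub_log_mul_le (wp_pos ha) (wp_pos hb)
    (hlo (measure_cyl_seg_pos hstat hy p (n + m))) hhi

end Measure

theorem random_Birkhoff_sum_general {A : Type*} [MeasurableSpace A]
    (μ : Measure (ℕ → A)) [IsProbabilityMeasure μ]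
    (hstat : MeasurePreserving shift μ μ)
    (k : ℕ → ℝ) (hID : CondID μ k)
    (y : ℕ → A) (hy : y ∈ suppSet μ)
    (L : ℕ → List ℕ) (hLsum : ∀ N, (L N).sum = N)
    (lam : ℕ → ℝ) (hlam : Tendsto lam atTop atTop)
    (hLlen : ∀ N, ∀ ℓ ∈ L N, lam N ≤ (ℓ : ℝ)) :
    ∀ ε : ℝ, 0 < ε → ∃ N₀ : ℕ, ∀ N ≥ N₀,
      |(∑ i ∈ Finset.range (L N).length,
          Real.log (wp μ (seg y (((L N).take i).sum) ((L N).getD i 0)))) -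
        Real.log (wp μ (seg y 0 N))| ≤ ε * N := by
  intro ε hε
  obtain ⟨n₀, hk⟩ := eventually_atTop.mp (hID.2.1.bound hε)
  obtain ⟨N₀, hlam₀⟩ := eventually_atTop.mp (hlam.eventually_ge_atTop (n₀ : ℝ))
  refine ⟨N₀, fun N hN => ?_⟩
  have hkL : ∀ ℓ ∈ L N, k ℓ ≤ ε * ℓ := fun ℓ hℓ => by
    have hℓ₀ : n₀ ≤ ℓ := Nat.cast_le.mp ((hlam₀ N hN).trans (hLlen N ℓ hℓ))
    simpa using (le_abs_self _).trans (hk ℓ hℓ₀)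
  have htel := abs_sum_parsing_sub_le (fun p ℓ => Real.log (wp μ (seg y p ℓ))) k
    (fun p => by simp [wp_of_fin_zero]) (abs_log_wp_seg_add_sub_le hstat hID hy) (L N) 0
  simp only [zero_add] at htel
  rw [hLsum] at htel
  calc _ ≤ ((L N).map k).sum := htel
    _ ≤ ((L N).map fun ℓ : ℕ => ε * ℓ).sum := List.sum_le_sum hkL
    _ = ε * N := by rw [List.sum_map_mul_left, ← Nat.cast_list_sum, hLsum]

/-- **Lemma 3.10.** Under (ID), for any parsings of `y_1^N` into consecutive words of
lengths at least `λ_N → ∞`, the sum of the log-probabilities of the words equals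
`ln ℙ[y_1^N] + o(N)`. -/
theorem random_Birkhoff_sum {A : Type*} [Fintype A] [MeasurableSpace A]
    (μ : Measure (ℕ → A)) [IsProbabilityMeasure μ]
    (hstat : MeasurePreserving shift μ μ)
    (k : ℕ → ℝ) (hID : CondID μ k)
    (y : ℕ → A) (hy : y ∈ suppSet μ)
    (L : ℕ → List ℕ) (hLsum : ∀ N, (L N).sum = N)
    (lam : ℕ → ℝ) (hlam0 : ∀ N, 0 ≤ lam N) (hlam : Tendsto lam atTop atTop)
    (hLlen : ∀ N, ∀ ℓ ∈ L N, lam N ≤ (ℓ : ℝ)) :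
    ∀ ε : ℝ, 0 < ε → ∃ N₀ : ℕ, ∀ N ≥ N₀,
      |(∑ i ∈ Finset.range (L N).length,
          Real.log (wp μ (seg y (((L N).take i).sum) ((L N).getD i 0)))) -
        Real.log (wp μ (seg y 0 N))| ≤ ε * N :=
  random_Birkhoff_sum_general μ hstat k hID y hy L hLsum lam hlam hLlen

end ZM
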